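/- Precision of the weakest precondition with precise narrowing: if ∇̄ is precise (∇̄ M = ⊓ M, the meet/intersection, for all M), then validity of {P} w {R} implies P ⊑ wp(w, R). -/

import Mathlib

open scoped NNReal

variable {C E : Type*}

/-- Step sequences along a trace (list of symbols). -/
def Steps (step : C → (E ⊕ ℝ≥0) → C → Prop) : C → List (E ⊕ ℝ≥0) → C → Prop
  | c, [], c' => c = c'
  | c, s :: w, c' => ∃ c'', step c s c'' ∧ Steps step c'' w c'

/-- Trace equivalence: the least equivalence closed under inserting zero time
progressions and splitting a time progression into two summands. -/
inductive TEquiv : List (E ⊕ ℝ≥0) → List (E ⊕ ℝ≥0) → Prop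
  | refl (w) : TEquiv w w
  | symm {w u} : TEquiv w u → TEquiv u w
  | trans {w u v} : TEquiv w u → TEquiv u v → TEquiv w v
  | zero (w1 w2) : TEquiv (w1 ++ w2) (w1 ++ Sum.inr 0 :: w2)
  | split (w1 w2) (t t1 t2 : ℝ≥0) (h : t = t1 + t2) :
      TEquiv (w1 ++ Sum.inr t :: w2) (w1 ++ Sum.inr t1 :: Sum.inr t2 :: w2)

/-- Hoare validity: from every configuration satisfying `P`, every step
sequence along any trace equivalent to `w` ends in a configuration in `R`. -/
def HoareValid (step : C → (E ⊕ ℝ≥0) → C → Prop)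
    (P : Set C) (w : List (E ⊕ ℝ≥0)) (R : Set C) : Prop :=
  ∀ cf ∈ P, ∀ u, TEquiv u w → ∀ cf', Steps step cf u cf' → cf' ∈ R

/-- Semantic post image for one symbol. -/
def postSem (step : C → (E ⊕ ℝ≥0) → C → Prop) (s : E ⊕ ℝ≥0) (P : Set C) :
    Set C :=
  {cf' | ∃ cf ∈ P, step cf s cf'}

/-- Iterated post image along a list of time progressions. -/
def iterPost (step : C → (E ⊕ ℝ≥0) → C → Prop) (l : List ℝ≥0) (P : Set C) :
    Set C :=
  l.foldl (fun acc t => postSem step (Sum.inr t) acc) P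

/-- Strongest postcondition for one symbol: post image for events; for time
progressions, the (precise) widening, i.e. the union over all finite
decompositions of the time progression, of the iterated post images. -/
def spSym (step : C → (E ⊕ ℝ≥0) → C → Prop) : (E ⊕ ℝ≥0) → Set C → Set C
  | Sum.inl e, P => postSem step (Sum.inl e) P
  | Sum.inr t, P => ⋃ (l : List ℝ≥0) (_ : l.sum = t), iterPost step l P

/-- Strongest postcondition of a trace, by composition. -/
def sp (step : C → (E ⊕ ℝ≥0) → C → Prop) (P : Set C) (w : List (E ⊕ ℝ≥0)) :
    Set C :=
  w.foldl (fun acc s => spSym step s acc) P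

/-- Semantic pre image for one symbol: all `s`-successors lie in `R`. -/
def preSem (step : C → (E ⊕ ℝ≥0) → C → Prop) (s : E ⊕ ℝ≥0) (R : Set C) :
    Set C :=
  {cf | ∀ cf', step cf s cf' → cf' ∈ R}

/-- Iterated pre image along a list of time progressions. -/
def iterPre (step : C → (E ⊕ ℝ≥0) → C → Prop) (l : List ℝ≥0) (R : Set C) :
    Set C :=
  l.foldr (fun t acc => preSem step (Sum.inr t) acc) R

/-- Weakest precondition for one symbol: pre image for events; for time
progressions, the (precise) narrowing, i.e. the intersection over all finite
decompositions of the time progression, of the iterated pre images. -/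
def wpSym (step : C → (E ⊕ ℝ≥0) → C → Prop) : (E ⊕ ℝ≥0) → Set C → Set C
  | Sum.inl e, R => preSem step (Sum.inl e) R
  | Sum.inr t, R => ⋂ (l : List ℝ≥0) (_ : l.sum = t), iterPre step l R

/-- Weakest precondition of a trace, by right-to-left composition. -/
def wp (step : C → (E ⊕ ℝ≥0) → C → Prop) (w : List (E ⊕ ℝ≥0)) (R : Set C) :
    Set C :=
  w.foldr (fun s acc => wpSym step s acc) R


/-! Unfolding `wp` symbol by symbol, a time progression `t` contributes the intersection, over
all decompositions `l` of `t`, of the iterated pre images. A run along `l` is a run along a trace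
equivalent to `t`, so the Hoare premise, transported past the prefix already executed (`wpSem`),
meets every member of that intersection. -/

namespace TEquiv

lemma append_left (v : List (E ⊕ ℝ≥0)) {w u : List (E ⊕ ℝ≥0)} (h : TEquiv w u) :
    TEquiv (v ++ w) (v ++ u) := by
  induction h with
  | refl w => exact .refl _
  | symm _ ih => exact ih.symm
  | trans _ _ ih₁ ih₂ => exact ih₁.trans ih₂
  | zero w₁ w₂ => simpa using TEquiv.zero (v ++ w₁) w₂
  | split w₁ w₂ t t₁ t₂ ht => simpa using TEquiv.split (v ++ w₁) w₂ t t₁ t₂ ht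

lemma append_right {w u : List (E ⊕ ℝ≥0)} (h : TEquiv w u) (v : List (E ⊕ ℝ≥0)) :
    TEquiv (w ++ v) (u ++ v) := by
  induction h with
  | refl w => exact .refl _
  | symm _ ih => exact ih.symm
  | trans _ _ ih₁ ih₂ => exact ih₁.trans ih₂
  | zero w₁ w₂ => simpa using TEquiv.zero w₁ (w₂ ++ v)
  | split w₁ w₂ t t₁ t₂ ht => simpa using TEquiv.split w₁ (w₂ ++ v) t t₁ t₂ ht

lemma map_inr (l : List ℝ≥0) : TEquiv (l.map Sum.inr : List (E ⊕ ℝ≥0)) [Sum.inr l.sum] := by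
  induction l with
  | nil => exact TEquiv.zero [] []
  | cons a l ih =>
    exact (ih.append_left [Sum.inr a]).trans (TEquiv.split [] [] (a + l.sum) a l.sum rfl).symm

end TEquiv

lemma Steps.append {step : C → (E ⊕ ℝ≥0) → C → Prop} {v w : List (E ⊕ ℝ≥0)} {c m c' : C}
    (hv : Steps step c v m) (hw : Steps step m w c') : Steps step c (v ++ w) c' := by
  induction v generalizing c with
  | nil => cases hv; exact hw
  | cons s v ih =>
    obtain ⟨c'', hs, hv⟩ := hv
    exact ⟨c'', hs, ih hv⟩

lemma mem_iterPre {step : C → (E ⊕ ℝ≥0) → C → Prop} {l : List ℝ≥0} {R : Set C} {cf : C} :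
    cf ∈ iterPre step l R ↔ ∀ cf', Steps step cf (l.map Sum.inr) cf' → cf' ∈ R := by
  induction l generalizing cf with
  | nil => exact ⟨fun h cf' hcf' => hcf' ▸ h, fun h => h cf rfl⟩
  | cons a l ih =>
    constructor
    · rintro h cf' ⟨c'', hs, hrest⟩
      exact ih.mp (h c'' hs) cf' hrest
    · intro h c'' hs
      exact ih.mpr fun cf' hrest => h cf' ⟨c'', hs, hrest⟩

def wpSem (step : C → (E ⊕ ℝ≥0) → C → Prop) (w : List (E ⊕ ℝ≥0)) (R : Set C) : Set C :=
  {cf | ∀ u, TEquiv u w → ∀ cf', Steps step cf u cf' → cf' ∈ R}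

lemma mem_wpSem_of_steps {step : C → (E ⊕ ℝ≥0) → C → Prop} {v v' w : List (E ⊕ ℝ≥0)}
    {R : Set C} {cf m : C} (hv : TEquiv v' v) (hcf : cf ∈ wpSem step (v ++ w) R)
    (hs : Steps step cf v' m) : m ∈ wpSem step w R :=
  fun u hu cf' hu' =>
    hcf (v' ++ u) ((hu.append_left v').trans (hv.append_right w)) cf' (hs.append hu')

lemma wpSem_subset_wp (step : C → (E ⊕ ℝ≥0) → C → Prop) (w : List (E ⊕ ℝ≥0)) (R : Set C) :
    wpSem step w R ⊆ wp step w R := by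
  induction w with
  | nil => exact fun cf hcf => hcf [] (.refl _) cf rfl
  | cons s w ih =>
    intro cf hcf
    cases s with
    | inl e => exact fun m hs => ih (mem_wpSem_of_steps (.refl [_]) hcf ⟨m, hs, rfl⟩)
    | inr t =>
      simp only [wp, List.foldr, wpSym, Set.mem_iInter]
      rintro l rfl
      exact mem_iterPre.mpr fun m hs => ih (mem_wpSem_of_steps (TEquiv.map_inr l) hcf hs)

/-- Precision of the weakest precondition with the precise narrowing
(`∇̄ M = ⊓ M`, as used in the definition of `wp`): validity of `{P} w {R}`
implies `P ⊑ wp(w, R)`. -/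
theorem wp_precise (step : C → (E ⊕ ℝ≥0) → C → Prop)
    (P R : Set C) (w : List (E ⊕ ℝ≥0))
    (h : HoareValid step P w R) : P ⊆ wp step w R :=
  fun cf hcf => wpSem_subset_wp step w R (h cf hcf)
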